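/- arXiv:2301.12649 — 3 statements merged into one kernel-verified Lean document; each statement's English description precedes it below -/
import Mathlib

section
/- Let y = Xβ + ε with ε ~ N(0, σ²I_n), X ∈ ℝ^{n×p} of full column rank, n ≥ 1, and β̄ = (X^TX)^{-1}X^T y. Define the STLS non-active set estimate K̂ = {j : |β̄_j| ≤ σ√(2 log(n) · [(X^TX)^{-1}]_{jj})}. Then the false discovery probability satisfies 1 − P(K_β ⊆ K̂) ≤ |K_β|/n, i.e., with probability at least 1 − |K_β|/n every truly zero coefficient is thresholded to zero. (Lemma 3.2(i), with q = |K_β|.) -/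
/-!
Since `XᵀX` is invertible, `β̄ = β + (XᵀX)⁻¹Xᵀε`, so for an inactive index `j` the estimate `β̄ⱼ`
is `c ⬝ᵥ ε` with `c` the `j`-th row of `(XᵀX)⁻¹Xᵀ`: a centred Gaussian of variance
`σ² (c ⬝ᵥ c) = σ² [(XᵀX)⁻¹]ⱼⱼ`. For such a Gaussian, `P(|Z| > t) ≤ exp (-t² / 2v)` without the usual
factor `2`: on `(t, ∞)` its density is at most `exp (-t² / 2v)` times the density of `N(t, v)`,
which puts mass `1/2` there. The threshold makes this `1/n` for each inactive index, and a union
bound over the `|K_β|` of them concludes.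
-/

open MeasureTheory ProbabilityTheory Matrix
open scoped ENNReal NNReal

lemma gaussianReal_Iio_eq_Ioi (μ : ℝ) (v : ℝ≥0) :
    gaussianReal μ v (Set.Iio μ) = gaussianReal μ v (Set.Ioi μ) := by
  have h_refl : (gaussianReal μ v).map (2 * μ - ·) = gaussianReal μ v := by
    rw [gaussianReal_map_const_sub]; ring_nf
  conv_lhs => rw [← h_refl]
  rw [Measure.map_apply (by fun_prop) measurableSet_Iio]
  congr 1
  ext x
  simp only [Set.mem_preimage, Set.mem_Iio, Set.mem_Ioi]
  constructor <;> intro h <;> linarith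

lemma two_mul_gaussianReal_Ioi_self_le_one (μ : ℝ) (v : ℝ≥0) :
    2 * gaussianReal μ v (Set.Ioi μ) ≤ 1 := by
  have h_disj : Disjoint (Set.Ioi μ) (Set.Iio μ) := Set.Ioi_disjoint_Iio_same
  calc 2 * gaussianReal μ v (Set.Ioi μ)
      = gaussianReal μ v (Set.Ioi μ) + gaussianReal μ v (Set.Iio μ) := by
        rw [gaussianReal_Iio_eq_Ioi, two_mul]
    _ = gaussianReal μ v (Set.Ioi μ ∪ Set.Iio μ) := (measure_union h_disj measurableSet_Iio).symm
    _ ≤ 1 := prob_le_one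

lemma gaussianPDFReal_zero_le_exp_mul {v : ℝ≥0} {t x : ℝ} (ht : 0 ≤ t) (hx : t ≤ x) :
    gaussianPDFReal 0 v x ≤ Real.exp (-(t ^ 2 / (2 * v))) * gaussianPDFReal t v x := by
  simp only [gaussianPDFReal, sub_zero]
  rw [mul_left_comm, ← Real.exp_add]
  gcongr
  rw [← neg_div, ← add_div]
  gcongr
  nlinarith [mul_nonneg ht (sub_nonneg.2 hx)]

lemma two_mul_gaussianReal_Ioi_le (v : ℝ≥0) {t : ℝ} (ht : 0 ≤ t) :
    2 * gaussianReal 0 v (Set.Ioi t) ≤ ENNReal.ofReal (Real.exp (-(t ^ 2 / (2 * v)))) := by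
  rcases eq_or_ne v 0 with rfl | hv
  · rw [gaussianReal_zero_var, Measure.dirac_apply' _ measurableSet_Ioi,
      Set.indicator_of_notMem (Set.notMem_Ioi.2 ht)]
    simp
  set e := ENNReal.ofReal (Real.exp (-(t ^ 2 / (2 * v))))
  have h_shift : gaussianReal 0 v (Set.Ioi t) ≤ e * gaussianReal t v (Set.Ioi t) := by
    rw [gaussianReal_apply _ hv, gaussianReal_apply _ hv, ← lintegral_const_mul _
      (measurable_gaussianPDF _ _)]
    refine setLIntegral_mono (by fun_prop) fun x hx => ?_
    simp only [gaussianPDF, e, ← ENNReal.ofReal_mul (Real.exp_pos _).le]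
    exact ENNReal.ofReal_le_ofReal (gaussianPDFReal_zero_le_exp_mul ht hx.le)
  calc 2 * gaussianReal 0 v (Set.Ioi t) ≤ e * (2 * gaussianReal t v (Set.Ioi t)) := by
        rw [mul_left_comm]; gcongr
    _ ≤ e := mul_le_of_le_one_right' (two_mul_gaussianReal_Ioi_self_le_one t v)

lemma gaussianReal_lt_abs_le (v : ℝ≥0) {t : ℝ} (ht : 0 ≤ t) :
    gaussianReal 0 v {x | t < |x|} ≤ ENNReal.ofReal (Real.exp (-(t ^ 2 / (2 * v)))) := by
  have h_neg : gaussianReal 0 v (Set.Iio (-t)) = gaussianReal 0 v (Set.Ioi t) := by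
    conv_lhs => rw [← neg_zero, ← gaussianReal_map_neg]
    rw [Measure.map_apply measurable_neg measurableSet_Iio]
    congr 1
    ext x
    simp
  have h_split : {x : ℝ | t < |x|} = Set.Ioi t ∪ Set.Iio (-t) := by
    ext x
    simp only [Set.mem_ofPred_eq, Set.mem_union, Set.mem_Ioi, Set.mem_Iio, lt_abs, lt_neg]
  calc gaussianReal 0 v {x | t < |x|}
      ≤ gaussianReal 0 v (Set.Ioi t) + gaussianReal 0 v (Set.Iio (-t)) := by
        rw [h_split]; exact measure_union_le _ _
    _ = 2 * gaussianReal 0 v (Set.Ioi t) := by rw [h_neg, two_mul]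
    _ ≤ _ := two_mul_gaussianReal_Ioi_le v ht

lemma gaussianReal_sqrt_two_mul_log_lt_abs_le {v : ℝ≥0} (hv : v ≠ 0) {a : ℝ} (ha : 1 ≤ a) :
    gaussianReal 0 v {x | Real.sqrt (2 * Real.log a * v) < |x|} ≤ ENNReal.ofReal a⁻¹ := by
  have hv' : (0 : ℝ) < v := by positivity
  have h_log : 0 ≤ 2 * Real.log a * v := by have := Real.log_nonneg ha; positivity
  refine (gaussianReal_lt_abs_le v (Real.sqrt_nonneg _)).trans_eq ?_
  rw [Real.sq_sqrt h_log, mul_div_mul_right _ _ hv'.ne', mul_div_cancel_left₀ _ two_ne_zero,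
    Real.exp_neg, Real.exp_log (by linarith)]

section LeastSquares

variable {R : Type*} [CommRing R] {m k : Type*} [Fintype m] [Fintype k] [DecidableEq k]
  {X : Matrix m k R}

lemma gram_inv_mul_transpose_mul_self (hX : IsUnit (Xᵀ * X).det) :
    (Xᵀ * X)⁻¹ * Xᵀ * X = 1 := by
  rw [Matrix.mul_assoc, nonsing_inv_mul _ hX]

lemma gram_inv_mulVec_transpose_mulVec_add (hX : IsUnit (Xᵀ * X).det) (β : k → R) (e : m → R) :
    (Xᵀ * X)⁻¹ *ᵥ (Xᵀ *ᵥ (X *ᵥ β + e)) = β + ((Xᵀ * X)⁻¹ * Xᵀ) *ᵥ e := by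
  rw [mulVec_add, mulVec_add, mulVec_mulVec, mulVec_mulVec, mulVec_mulVec,
    gram_inv_mul_transpose_mul_self hX, one_mulVec]

lemma gram_inv_apply_self_eq_dotProduct (hX : IsUnit (Xᵀ * X).det) (j : k) :
    (Xᵀ * X)⁻¹ j j = ((Xᵀ * X)⁻¹ * Xᵀ) j ⬝ᵥ ((Xᵀ * X)⁻¹ * Xᵀ) j := by
  have h_cov : (Xᵀ * X)⁻¹ * Xᵀ * ((Xᵀ * X)⁻¹ * Xᵀ)ᵀ = (Xᵀ * X)⁻¹ := by
    rw [transpose_mul, transpose_nonsing_inv, transpose_mul, transpose_transpose,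
      ← Matrix.mul_assoc, gram_inv_mul_transpose_mul_self hX, Matrix.one_mul]
  conv_lhs => rw [← h_cov]
  rfl

lemma gram_inv_mul_transpose_row_ne_zero [Nontrivial R] (hX : IsUnit (Xᵀ * X).det) (j : k) :
    ((Xᵀ * X)⁻¹ * Xᵀ) j ≠ 0 := by
  intro h
  have h_diag := congrFun (congrFun (gram_inv_mul_transpose_mul_self hX) j) j
  rw [Matrix.mul_apply, one_apply_eq] at h_diag
  simp only [h, Pi.zero_apply, zero_mul, Finset.sum_const_zero, zero_ne_one] at h_diag

end LeastSquares

lemma one_sub_measure_setOf_forall_le {Ω ι : Type*} [MeasurableSpace Ω] [Finite ι]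
    (μ : Measure Ω) [IsProbabilityMeasure μ] (q : ι → Prop) (good : ι → Ω → Prop) {δ : ℝ≥0∞}
    (h : ∀ i, q i → μ {ω | ¬ good i ω} ≤ δ) :
    1 - μ {ω | ∀ i, q i → good i ω} ≤ {i | q i}.ncard * δ := by
  have hfin : {i | q i}.Finite := Set.toFinite _
  have h_compl : {ω | ∀ i, q i → good i ω}ᶜ = ⋃ i ∈ hfin.toFinset, {ω | ¬ good i ω} := by
    ext ω; simp
  calc 1 - μ {ω | ∀ i, q i → good i ω} ≤ μ {ω | ∀ i, q i → good i ω}ᶜ := by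
        rw [tsub_le_iff_left, ← measure_univ (μ := μ)]; exact measure_univ_le_add_compl _
    _ ≤ ∑ i ∈ hfin.toFinset, μ {ω | ¬ good i ω} := h_compl ▸ measure_biUnion_finset_le _ _
    _ ≤ ∑ _i ∈ hfin.toFinset, δ := Finset.sum_le_sum fun i hi => h i (by simpa using hi)
    _ = {i | q i}.ncard * δ := by
        rw [Finset.sum_const, nsmul_eq_mul, Set.ncard_eq_toFinset_card _ hfin]

lemma measure_mul_sqrt_two_mul_log_lt_abs_dotProduct_le {Ω ι : Type*} [MeasurableSpace Ω]
    [Fintype ι] {P : Measure Ω} {ε : Ω → ι → ℝ} (hε : Measurable ε) {σ : ℝ} (hσ : 0 < σ)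
    {c : ι → ℝ} (hc : c ≠ 0)
    (hc_law : P.map (fun ω => c ⬝ᵥ ε ω) = gaussianReal 0 (Real.toNNReal (σ ^ 2 * (c ⬝ᵥ c))))
    {a : ℝ} (ha : 1 ≤ a) :
    P {ω | σ * Real.sqrt (2 * Real.log a * (c ⬝ᵥ c)) < |c ⬝ᵥ ε ω|} ≤ ENNReal.ofReal a⁻¹ := by
  have h_var : 0 < σ ^ 2 * (c ⬝ᵥ c) := by
    have h_cc : 0 < c ⬝ᵥ c := (Fintype.sum_nonneg fun i => mul_self_nonneg (c i)).lt_of_ne'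
      (dotProduct_self_eq_zero.not.2 hc)
    positivity
  have h_thr : σ * Real.sqrt (2 * Real.log a * (c ⬝ᵥ c))
      = Real.sqrt (2 * Real.log a * (σ ^ 2 * (c ⬝ᵥ c)).toNNReal) := by
    rw [Real.coe_toNNReal _ h_var.le, mul_left_comm, Real.sqrt_mul (sq_nonneg σ),
      Real.sqrt_sq hσ.le]
  change P ((fun ω => c ⬝ᵥ ε ω) ⁻¹' {x | _ < |x|}) ≤ _
  rw [h_thr, ← Measure.map_apply (by fun_prop)
    (measurableSet_lt measurable_const measurable_abs), hc_law]
  exact gaussianReal_sqrt_two_mul_log_lt_abs_le (by simpa using h_var) ha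

/-- False discovery probability bound for the STLS non-active set estimate
`K̂ = {j : |β̄ⱼ| ≤ σ√(2 log n · [(XᵀX)⁻¹]ⱼⱼ)}`: with `K_β = {j : βⱼ = 0}` and `q = |K_β|`,
`1 − P(K_β ⊆ K̂) ≤ q/n`. -/
theorem stls_false_discovery_probability
    {Ω : Type*} [MeasurableSpace Ω] (P : Measure Ω) [IsProbabilityMeasure P]
    {n p : ℕ} (hn : 1 ≤ n)
    (X : Matrix (Fin n) (Fin p) ℝ) (hX : IsUnit (Xᵀ * X).det)
    (β : Fin p → ℝ) (σ : ℝ) (hσ : 0 < σ)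
    (ε : Ω → Fin n → ℝ) (hεmeas : Measurable ε)
    (hεgauss : ∀ c : Fin n → ℝ,
      P.map (fun ω => c ⬝ᵥ ε ω) = gaussianReal 0 (Real.toNNReal (σ ^ 2 * (c ⬝ᵥ c))))
    (y : Ω → Fin n → ℝ) (hy : ∀ ω, y ω = X.mulVec β + ε ω)
    (βbar : Ω → Fin p → ℝ)
    (hβbar : ∀ ω, βbar ω = (Xᵀ * X)⁻¹.mulVec (Xᵀ.mulVec (y ω))) :
    (1 : ℝ≥0∞) -
      P {ω | ∀ j : Fin p, β j = 0 →
        |βbar ω j| ≤ σ * Real.sqrt (2 * Real.log n * (Xᵀ * X)⁻¹ j j)}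
      ≤ ENNReal.ofReal (({j : Fin p | β j = 0} : Set (Fin p)).ncard / n) := by
  have hn' : (1 : ℝ) ≤ n := by exact_mod_cast hn
  refine (one_sub_measure_setOf_forall_le P (β · = 0) _ (δ := ENNReal.ofReal (n : ℝ)⁻¹)
    fun j hj => ?_).trans_eq ?_
  · set c := ((Xᵀ * X)⁻¹ * Xᵀ) j
    have h_coord (ω : Ω) : βbar ω j = c ⬝ᵥ ε ω := by
      rw [hβbar, hy, gram_inv_mulVec_transpose_mulVec_add hX, Pi.add_apply, hj, zero_add]
      rfl
    have h_event : {ω | ¬ |βbar ω j| ≤ σ * Real.sqrt (2 * Real.log n * (Xᵀ * X)⁻¹ j j)}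
        = {ω | σ * Real.sqrt (2 * Real.log n * (c ⬝ᵥ c)) < |c ⬝ᵥ ε ω|} := by
      simp only [h_coord, gram_inv_apply_self_eq_dotProduct hX, not_le]; rfl
    rw [h_event]
    exact measure_mul_sqrt_two_mul_log_lt_abs_dotProduct_le hεmeas hσ
      (gram_inv_mul_transpose_row_ne_zero hX j) (hεgauss c) hn'
  · rw [← ENNReal.ofReal_natCast, ← ENNReal.ofReal_mul (by positivity), div_eq_mul_inv]
end

section
/- Let y = Xβ + ε with ε ~ N(0, σ²I_n), X ∈ ℝ^{n×p} of full column rank, n ≥ 1, ρ₁ > 0 the minimum eigenvalue of (1/n)X^TX, and β̄ = (X^TX)^{-1}X^T y. Let K̂ = {j : |β̄_j| ≤ σ√(2 log(n) · [(X^TX)^{-1}]_{jj})}, m = |J_β| ≥ 1, |β_{(1)}| = min_{j ∈ J_β}|β_j|, and u = √(nρ₁)·|β_{(1)}|/σ − √(2 log n). If u ≥ √(2 log m), then the true discovery probability satisfies P(K̂ ⊆ K_β) ≥ 1 − 2 exp( −(1/2)( u − √(2 log m) )² ), i.e., with this probability no active coefficient is thresholded to zero. (Lemma 3.2(ii), where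 m = p − q_{K_β} is the number of active coefficients.) -/
/-!
Write `β̄ = β + A ε` with `A = (XᵀX)⁻¹Xᵀ`. Since `A Aᵀ = (XᵀX)⁻¹`, the noise `(A ε)ⱼ` is a centred
Gaussian of variance `σ² [(XᵀX)⁻¹]ⱼⱼ`, and testing the eigenvalue bound on `(XᵀX)⁻¹ eⱼ` gives
`n ρ₁ [(XᵀX)⁻¹]ⱼⱼ ≤ 1`. An active coordinate falls below its threshold `τⱼ` only if its noise
exceeds `|βⱼ| - τⱼ ≥ σ √[(XᵀX)⁻¹]ⱼⱼ · u`, which by the Chernoff bound has probability at most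
`2 exp (-u²/2)`. A union bound over the `m = exp ((√(2 log m))² / 2)` active coordinates and
`√(2 log m) ≤ u` finish the proof.
-/

open MeasureTheory ProbabilityTheory Matrix Real
open scoped NNReal

namespace Matrix

variable {m n : Type*} [Fintype m] [Fintype n] [DecidableEq n]

lemma mul_nonsing_inv_diag_le_one {A : Matrix n n ℝ} (hA : IsUnit A.det) {c : ℝ} (hc : 0 ≤ c)
    (hquad : ∀ v : n → ℝ, c * (v ⬝ᵥ v) ≤ v ⬝ᵥ A *ᵥ v) (j : n) : c * A⁻¹ j j ≤ 1 := by
  -- test the quadratic form on `v = A⁻¹ eⱼ`, for which `v ⬝ᵥ A v = vⱼ = A⁻¹ j j`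
  set v := A⁻¹ *ᵥ Pi.single j 1
  have hvj : v j = A⁻¹ j j := by simp [v]
  have hquad_v : v ⬝ᵥ A *ᵥ v = A⁻¹ j j := by
    rw [mulVec_mulVec, mul_nonsing_inv _ hA, one_mulVec, dotProduct_single_one, hvj]
  have hvv : A⁻¹ j j ^ 2 ≤ v ⬝ᵥ v := by
    rw [← hvj, sq]
    exact Finset.single_le_sum (f := fun k ↦ v k * v k) (fun k _ ↦ mul_self_nonneg _)
      (Finset.mem_univ j)
  have : c * A⁻¹ j j ^ 2 ≤ A⁻¹ j j :=
    (mul_le_mul_of_nonneg_left hvv hc).trans (hquad_v ▸ hquad v)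
  nlinarith

variable (X : Matrix m n ℝ) (hX : IsUnit (Xᵀ * X).det)
include hX

lemma inv_gram_mulVec_transpose_mulVec_add (β : n → ℝ) (e : m → ℝ) :
    (Xᵀ * X)⁻¹ *ᵥ (Xᵀ *ᵥ (X *ᵥ β + e)) = β + ((Xᵀ * X)⁻¹ * Xᵀ) *ᵥ e := by
  rw [mulVec_add, mulVec_add, mulVec_mulVec, mulVec_mulVec, mulVec_mulVec, Matrix.mul_assoc,
    nonsing_inv_mul _ hX, one_mulVec]

lemma inv_gram_mul_transpose_mul_transpose :
    ((Xᵀ * X)⁻¹ * Xᵀ) * ((Xᵀ * X)⁻¹ * Xᵀ)ᵀ = (Xᵀ * X)⁻¹ := by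
  rw [transpose_mul, transpose_transpose, transpose_nonsing_inv, transpose_mul,
    transpose_transpose, Matrix.mul_assoc, ← Matrix.mul_assoc Xᵀ, mul_nonsing_inv _ hX,
    Matrix.mul_one]

lemma dotProduct_self_inv_gram_mul_transpose_row (j : n) :
    ((Xᵀ * X)⁻¹ * Xᵀ) j ⬝ᵥ ((Xᵀ * X)⁻¹ * Xᵀ) j = (Xᵀ * X)⁻¹ j j :=
  mul_apply'.symm.trans
    (congr_fun (congr_fun (inv_gram_mul_transpose_mul_transpose X hX) j) j)

lemma inv_gram_diag_pos (j : n) : 0 < (Xᵀ * X)⁻¹ j j := by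
  rw [← dotProduct_self_inv_gram_mul_transpose_row X hX]
  refine lt_of_le_of_ne (Fintype.sum_nonneg fun _ ↦ mul_self_nonneg _) (Ne.symm fun h ↦ ?_)
  -- the row is nonzero since `(Xᵀ X)⁻¹ Xᵀ` is a left inverse of `X`
  have hrow := congr_fun (congr_fun (Matrix.mul_assoc _ Xᵀ X ▸ nonsing_inv_mul _ hX) j) j
  rw [mul_apply, dotProduct_self_eq_zero.1 h] at hrow
  simp at hrow

end Matrix

lemma threshold_margin {σ s c b L : ℝ} (hσ : 0 < σ) (hs : 0 ≤ s) (hcs : c * s ≤ 1) (hb : 0 ≤ b) :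
    σ * √s * (√c * b / σ - √L) ≤ b - σ * √(L * s) := by
  have hcs' : √c * √s ≤ 1 := by rw [← sqrt_mul' c hs]; exact sqrt_le_one.2 hcs
  calc σ * √s * (√c * b / σ - √L) = √c * √s * b - σ * (√L * √s) := by field_simp
    _ ≤ b - σ * √(L * s) := by
      rw [sqrt_mul' L hs]
      gcongr
      exact mul_le_of_le_one_left hb hcs'

lemma nat_mul_exp_neg_sq_div_two_le {m : ℕ} (hm : 1 ≤ m) {u : ℝ} (hu : √(2 * log m) ≤ u) :
    m * exp (-u ^ 2 / 2) ≤ exp (-(1 / 2) * (u - √(2 * log m)) ^ 2) := by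
  set w := √(2 * log m)
  have hw : w ^ 2 = 2 * log m :=
    sq_sqrt (mul_nonneg two_pos.le (log_nonneg (by exact_mod_cast hm)))
  have hwu : w * w ≤ u * w := mul_le_mul_of_nonneg_right hu (sqrt_nonneg _)
  calc (m : ℝ) * exp (-u ^ 2 / 2) = exp (log m + -u ^ 2 / 2) := by
        rw [exp_add, exp_log (by exact_mod_cast hm)]
    _ ≤ exp (-(1 / 2) * (u - w) ^ 2) := exp_le_exp.2 (by nlinarith)

namespace ProbabilityTheory

variable {Ω : Type*} [MeasurableSpace Ω] {μ : Measure Ω} {X : Ω → ℝ}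

lemma HasSubgaussianMGF.measureReal_abs_ge_le [IsFiniteMeasure μ] {c : ℝ≥0}
    (h : HasSubgaussianMGF X c μ) {ε : ℝ} (hε : 0 ≤ ε) :
    μ.real {ω | ε ≤ |X ω|} ≤ 2 * exp (-ε ^ 2 / (2 * c)) :=
  calc μ.real {ω | ε ≤ |X ω|}
      ≤ μ.real ({ω | ε ≤ X ω} ∪ {ω | ε ≤ (-X) ω}) :=
        measureReal_mono fun _ hω ↦ le_abs.1 (Set.mem_ofPred.1 hω)
    _ ≤ μ.real {ω | ε ≤ X ω} + μ.real {ω | ε ≤ (-X) ω} := measureReal_union_le _ _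
    _ ≤ exp (-ε ^ 2 / (2 * c)) + exp (-ε ^ 2 / (2 * c)) :=
        add_le_add (h.measure_ge_le hε) (h.neg.measure_ge_le hε)
    _ = 2 * exp (-ε ^ 2 / (2 * c)) := by ring

lemma hasSubgaussianMGF_of_map_eq_gaussianReal {v : ℝ≥0} (hX : μ.map X = gaussianReal 0 v) :
    HasSubgaussianMGF X v μ := by
  have hXm : AEMeasurable X μ := .of_map_ne_zero (by simp [hX, IsProbabilityMeasure.ne_zero])
  refine (HasSubgaussianMGF.id_map_iff hXm).1 ⟨fun t ↦ ?_, fun t ↦ ?_⟩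
  · rw [hX]; exact integrable_exp_mul_gaussianReal t
  · rw [hX, mgf_id_gaussianReal]; simp

lemma measureReal_abs_ge_le_of_map_eq_gaussianReal [IsFiniteMeasure μ] {v : ℝ≥0}
    (hX : μ.map X = gaussianReal 0 v) (hv : 0 < v) {u t : ℝ} (hu : 0 ≤ u) (ht : √v * u ≤ t) :
    μ.real {ω | t ≤ |X ω|} ≤ 2 * exp (-u ^ 2 / 2) := by
  have ht0 : 0 ≤ t := (mul_nonneg (sqrt_nonneg _) hu).trans ht
  refine ((hasSubgaussianMGF_of_map_eq_gaussianReal hX).measureReal_abs_ge_le ht0).trans ?_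
  have hvu : v * u ^ 2 ≤ t ^ 2 :=
    calc (v : ℝ) * u ^ 2 = (√v * u) ^ 2 := by rw [mul_pow, sq_sqrt v.coe_nonneg]
      _ ≤ t ^ 2 := by gcongr
  refine mul_le_mul_of_nonneg_left (exp_le_exp.2 ?_) two_pos.le
  rw [neg_div, neg_div, neg_le_neg_iff, div_le_div_iff₀ two_pos (by positivity)]
  linarith

lemma measureReal_abs_add_le_le [IsFiniteMeasure μ] {v : ℝ≥0}
    (hX : μ.map X = gaussianReal 0 v) (hv : 0 < v) {u b τ : ℝ} (hu : 0 ≤ u)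
    (hbτ : √v * u ≤ |b| - τ) :
    μ.real {ω | |b + X ω| ≤ τ} ≤ 2 * exp (-u ^ 2 / 2) := by
  refine (measureReal_mono fun ω (hω : |b + X ω| ≤ τ) ↦ ?_).trans
    (measureReal_abs_ge_le_of_map_eq_gaussianReal hX hv hu hbτ)
  have := abs_sub (b + X ω) (X ω)
  simp only [add_sub_cancel_right] at this
  show |b| - τ ≤ |X ω|
  linarith

lemma ofReal_one_sub_sum_le_measure_forall_notMem [IsProbabilityMeasure μ] {ι : Type*}
    (J : Finset ι) (E : ι → Set Ω) :
    ENNReal.ofReal (1 - ∑ j ∈ J, μ.real (E j)) ≤ μ {ω | ∀ j ∈ J, ω ∉ E j} := by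
  have hcompl : {ω | ∀ j ∈ J, ω ∉ E j}ᶜ = ⋃ j ∈ J, E j := by ext; simp
  have hunion : μ {ω | ∀ j ∈ J, ω ∉ E j}ᶜ ≤ ENNReal.ofReal (∑ j ∈ J, μ.real (E j)) := by
    rw [hcompl, ENNReal.ofReal_sum_of_nonneg fun _ _ ↦ measureReal_nonneg]
    exact (measure_biUnion_finset_le J E).trans_eq
      (Finset.sum_congr rfl fun _ _ ↦ (ofReal_measureReal (measure_ne_top _ _)).symm)
  calc ENNReal.ofReal (1 - ∑ j ∈ J, μ.real (E j))
      = 1 - ENNReal.ofReal (∑ j ∈ J, μ.real (E j)) := by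
        rw [ENNReal.ofReal_sub _ (Finset.sum_nonneg fun _ _ ↦ measureReal_nonneg),
          ENNReal.ofReal_one]
    _ ≤ 1 - μ {ω | ∀ j ∈ J, ω ∉ E j}ᶜ := tsub_le_tsub_left hunion 1
    _ ≤ μ {ω | ∀ j ∈ J, ω ∉ E j} := by
      rw [tsub_le_iff_right, ← measure_univ (μ := μ)]
      exact measure_univ_le_add_compl (μ := μ) _

end ProbabilityTheory

theorem stls_true_discovery_probability_general
    {Ω : Type*} [MeasurableSpace Ω] (P : Measure Ω) [IsProbabilityMeasure P]
    {n p : ℕ}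
    (X : Matrix (Fin n) (Fin p) ℝ) (hX : IsUnit (Xᵀ * X).det)
    (ρ₁ : ℝ) (hρ₁ : 0 < ρ₁)
    (hmin : ∀ v : Fin p → ℝ, (n : ℝ) * ρ₁ * (v ⬝ᵥ v) ≤ v ⬝ᵥ (Xᵀ * X).mulVec v)
    (β : Fin p → ℝ) (σ : ℝ) (hσ : 0 < σ)
    (ε : Ω → Fin n → ℝ)
    (hεgauss : ∀ c : Fin n → ℝ,
      P.map (fun ω => c ⬝ᵥ ε ω) = gaussianReal 0 (Real.toNNReal (σ ^ 2 * (c ⬝ᵥ c))))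
    (y : Ω → Fin n → ℝ) (hy : ∀ ω, y ω = X.mulVec β + ε ω)
    (βbar : Ω → Fin p → ℝ)
    (hβbar : ∀ ω, βbar ω = (Xᵀ * X)⁻¹.mulVec (Xᵀ.mulVec (y ω)))
    (m : ℕ) (hm : m = ({j : Fin p | β j ≠ 0} : Set (Fin p)).ncard) (hm1 : 1 ≤ m)
    (b₁ : ℝ) (hb₁ : IsLeast {x : ℝ | ∃ j : Fin p, β j ≠ 0 ∧ x = |β j|} b₁)
    (u : ℝ) (hu : u = Real.sqrt ((n : ℝ) * ρ₁) * b₁ / σ - Real.sqrt (2 * Real.log n))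
    (hularge : Real.sqrt (2 * Real.log m) ≤ u) :
    ENNReal.ofReal (1 - 2 * Real.exp (-(1 / 2) * (u - Real.sqrt (2 * Real.log m)) ^ 2))
      ≤ P {ω | ∀ j : Fin p,
          |βbar ω j| ≤ σ * Real.sqrt (2 * Real.log n * (Xᵀ * X)⁻¹ j j) → β j = 0} := by
  set τ : Fin p → ℝ := fun j ↦ σ * √(2 * log n * (Xᵀ * X)⁻¹ j j)
  set J := ({j : Fin p | β j ≠ 0} : Set (Fin p)).toFinset
  have hb₁_nonneg : 0 ≤ b₁ := by obtain ⟨⟨j, -, rfl⟩, -⟩ := hb₁; exact abs_nonneg _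
  have hu_nonneg : 0 ≤ u := (sqrt_nonneg _).trans hularge
  have hmiss : ∀ j ∈ J, P.real {ω | |βbar ω j| ≤ τ j} ≤ 2 * exp (-u ^ 2 / 2) := by
    intro j hj
    have hs := inv_gram_diag_pos X hX j
    have hnoise := dotProduct_self_inv_gram_mul_transpose_row X hX j ▸
      hεgauss (((Xᵀ * X)⁻¹ * Xᵀ) j)
    simp only [hβbar, hy, inv_gram_mulVec_transpose_mulVec_add X hX]
    refine measureReal_abs_add_le_le hnoise (by positivity) hu_nonneg ?_
    calc √(σ ^ 2 * (Xᵀ * X)⁻¹ j j).toNNReal * u = σ * √((Xᵀ * X)⁻¹ j j) * u := by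
          rw [Real.coe_toNNReal _ (by positivity), sqrt_mul (by positivity), sqrt_sq hσ.le]
      _ ≤ b₁ - τ j := hu ▸ threshold_margin hσ hs.le
          (mul_nonsing_inv_diag_le_one hX (by positivity) hmin j) hb₁_nonneg
      _ ≤ |β j| - τ j := by gcongr; exact hb₁.2 ⟨j, by simpa [J] using hj, rfl⟩
  have hsum : ∑ j ∈ J, P.real {ω | |βbar ω j| ≤ τ j}
      ≤ 2 * exp (-(1 / 2) * (u - √(2 * log m)) ^ 2) :=
    calc ∑ j ∈ J, P.real {ω | |βbar ω j| ≤ τ j} ≤ J.card • (2 * exp (-u ^ 2 / 2)) :=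
          Finset.sum_le_card_nsmul _ _ _ hmiss
      _ = 2 * (m * exp (-u ^ 2 / 2)) := by
          rw [hm, Set.ncard_eq_toFinset_card', nsmul_eq_mul]; ring
      _ ≤ _ := by gcongr; exact nat_mul_exp_neg_sq_div_two_le hm1 hularge
  refine (ENNReal.ofReal_le_ofReal (sub_le_sub_left hsum 1)).trans
    ((ofReal_one_sub_sum_le_measure_forall_notMem J _).trans (measure_mono fun ω hω j hj ↦ ?_))
  by_contra hβj
  exact hω j (by simpa [J] using hβj) hj

/-- True discovery probability bound for the STLS non-active set estimate
`K̂ = {j : |β̄ⱼ| ≤ σ√(2 log n · [(XᵀX)⁻¹]ⱼⱼ)}`: with `ρ₁ > 0` the minimum eigenvalue of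
`(1/n)XᵀX` (encoded by the Rayleigh-quotient lower bound together with its attainment),
`m = |J_β| ≥ 1`, `b₁ = min_{j ∈ J_β} |βⱼ|` and `u = √(nρ₁)·b₁/σ − √(2 log n)`, if
`u ≥ √(2 log m)` then `P(K̂ ⊆ K_β) ≥ 1 − 2 exp(−(1/2)(u − √(2 log m))²)`. -/
theorem stls_true_discovery_probability
    {Ω : Type*} [MeasurableSpace Ω] (P : Measure Ω) [IsProbabilityMeasure P]
    {n p : ℕ} (hn : 1 ≤ n)
    (X : Matrix (Fin n) (Fin p) ℝ) (hX : IsUnit (Xᵀ * X).det)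
    (ρ₁ : ℝ) (hρ₁ : 0 < ρ₁)
    (hmin : ∀ v : Fin p → ℝ, (n : ℝ) * ρ₁ * (v ⬝ᵥ v) ≤ v ⬝ᵥ (Xᵀ * X).mulVec v)
    (hattain : ∃ v : Fin p → ℝ, v ≠ 0 ∧ (n : ℝ) * ρ₁ * (v ⬝ᵥ v) = v ⬝ᵥ (Xᵀ * X).mulVec v)
    (β : Fin p → ℝ) (σ : ℝ) (hσ : 0 < σ)
    (ε : Ω → Fin n → ℝ) (hεmeas : Measurable ε)
    (hεgauss : ∀ c : Fin n → ℝ,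
      P.map (fun ω => c ⬝ᵥ ε ω) = gaussianReal 0 (Real.toNNReal (σ ^ 2 * (c ⬝ᵥ c))))
    (y : Ω → Fin n → ℝ) (hy : ∀ ω, y ω = X.mulVec β + ε ω)
    (βbar : Ω → Fin p → ℝ)
    (hβbar : ∀ ω, βbar ω = (Xᵀ * X)⁻¹.mulVec (Xᵀ.mulVec (y ω)))
    (m : ℕ) (hm : m = ({j : Fin p | β j ≠ 0} : Set (Fin p)).ncard) (hm1 : 1 ≤ m)
    (b₁ : ℝ) (hb₁ : IsLeast {x : ℝ | ∃ j : Fin p, β j ≠ 0 ∧ x = |β j|} b₁)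
    (u : ℝ) (hu : u = Real.sqrt ((n : ℝ) * ρ₁) * b₁ / σ - Real.sqrt (2 * Real.log n))
    (hularge : Real.sqrt (2 * Real.log m) ≤ u) :
    ENNReal.ofReal (1 - 2 * Real.exp (-(1 / 2) * (u - Real.sqrt (2 * Real.log m)) ^ 2))
      ≤ P {ω | ∀ j : Fin p,
          |βbar ω j| ≤ σ * Real.sqrt (2 * Real.log n * (Xᵀ * X)⁻¹ j j) → β j = 0} :=
  stls_true_discovery_probability_general P X hX ρ₁ hρ₁ hmin β σ hσ ε hεgauss y hy βbar hβbar m hm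
    hm1 b₁ hb₁ u hu hularge
end

section
/- Let p, q, n be positive integers with q ≤ p and let K ⊆ {1,…,p} with |K| = p − q. Suppose that for each j ∈ K the random variables B_j^1,…,B_j^n are independent Bernoulli(θ_j) with θ_j ≤ 2/n. If the threshold probability p_c satisfies p_c ≥ 4/n, then the false discovery probability of the BIP estimator satisfies 1 − P(K ⊆ K̂_BIP) = P( ∃ j ∈ K : (1/n)∑_{b=1}^n B_j^b > p_c ) ≤ (p − q)·exp(2/3 − n p_c/3). In particular the false discovery probability is O(p·e^{−n}) when p_c is a fixed constant. (Theorem 4.1(i), via the Chernoff upper tail for Binomial(n, 2/n).) -/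
/-!
Union bound over `j ∈ K`, then a Chernoff bound for each row: at `t = log 2` the mgf of
`∑_b B_j^b` is `(1 + θ_j)^n ≤ exp (n θ_j) ≤ e²`, so the row exceeds `n p_c` with probability at
most `exp (2 - n p_c log 2) ≤ exp (2/3 - n p_c/3)`.
-/

open MeasureTheory ProbabilityTheory Real
open scoped ENNReal

lemma eq_indicator_of_zero_or_one {α : Type*} {f : α → ℝ} (hf : ∀ x, f x = 0 ∨ f x = 1) :
    f = {x | f x = 1}.indicator 1 := by
  ext x
  rcases hf x with h | h <;> simp [h]

section ZeroOneValued

variable {Ω : Type*} [MeasurableSpace Ω] {P : Measure Ω} {X : Ω → ℝ}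

lemma integrable_of_zero_or_one [IsFiniteMeasure P] (hXm : Measurable X)
    (hX : ∀ ω, X ω = 0 ∨ X ω = 1) : Integrable X P := by
  rw [eq_indicator_of_zero_or_one hX]
  exact (integrable_indicator_iff (hXm (measurableSet_singleton 1))).2
    (integrableOn_const (measure_ne_top _ _))

lemma integral_eq_measureReal_of_zero_or_one (hXm : Measurable X)
    (hX : ∀ ω, X ω = 0 ∨ X ω = 1) : P[X] = P.real {ω | X ω = 1} := by
  conv_lhs => rw [eq_indicator_of_zero_or_one hX]
  exact integral_indicator_one (hXm (measurableSet_singleton 1))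

lemma exp_mul_eq_of_zero_or_one {x : ℝ} (hx : x = 0 ∨ x = 1) (t : ℝ) :
    exp (t * x) = 1 + (exp t - 1) * x := by
  rcases hx with rfl | rfl <;> simp

lemma mgf_eq_of_zero_or_one [IsProbabilityMeasure P] (hXm : Measurable X)
    (hX : ∀ ω, X ω = 0 ∨ X ω = 1) (t : ℝ) :
    mgf X P t = 1 + (exp t - 1) * P.real {ω | X ω = 1} := by
  simp only [mgf, exp_mul_eq_of_zero_or_one (hX _)]
  rw [integral_add (integrable_const 1) ((integrable_of_zero_or_one hXm hX).const_mul _),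
    integral_const_mul, integral_eq_measureReal_of_zero_or_one hXm hX]
  simp

lemma integrable_exp_mul_of_zero_or_one [IsProbabilityMeasure P] (hXm : Measurable X)
    (hX : ∀ ω, X ω = 0 ∨ X ω = 1) (t : ℝ) : Integrable (fun ω ↦ exp (t * X ω)) P := by
  simp only [exp_mul_eq_of_zero_or_one (hX _)]
  exact (integrable_const 1).add ((integrable_of_zero_or_one hXm hX).const_mul _)

end ZeroOneValued

theorem measureReal_sum_ge_le_of_zero_or_one {Ω ι : Type*} [MeasurableSpace Ω] {P : Measure Ω}
    [IsProbabilityMeasure P] [Fintype ι] {X : ι → Ω → ℝ} (hind : iIndepFun X P)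
    (hXm : ∀ i, Measurable (X i)) (hX : ∀ i ω, X i ω = 0 ∨ X i ω = 1) {t : ℝ} (ht : 0 ≤ t)
    (ε : ℝ) :
    P.real {ω | ε ≤ ∑ i, X i ω} ≤
      exp (-t * ε + (exp t - 1) * ∑ i, P.real {ω | X i ω = 1}) := by
  have hsum : (fun ω ↦ ∑ i, X i ω) = ∑ i, X i := by ext ω; simp
  have hint : Integrable (fun ω ↦ exp (t * ∑ i, X i ω)) P := by
    simpa [hsum] using hind.integrable_exp_mul_sum hXm
      fun i _ ↦ integrable_exp_mul_of_zero_or_one (hXm i) (hX i) t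
  have hexp_t : 0 ≤ exp t - 1 := by linarith [one_le_exp ht]
  calc P.real {ω | ε ≤ ∑ i, X i ω}
      ≤ exp (-t * ε) * mgf (fun ω ↦ ∑ i, X i ω) P t := measure_ge_le_exp_mul_mgf ε ht hint
    _ = exp (-t * ε) * ∏ i, (1 + (exp t - 1) * P.real {ω | X i ω = 1}) := by
      rw [hsum, hind.mgf_sum hXm]
      simp only [mgf_eq_of_zero_or_one (hXm _) (hX _)]
    _ ≤ exp (-t * ε) * ∏ i, exp ((exp t - 1) * P.real {ω | X i ω = 1}) := by
      gcongr with i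
      linarith [add_one_le_exp ((exp t - 1) * P.real {ω | X i ω = 1})]
    _ = exp (-t * ε + (exp t - 1) * ∑ i, P.real {ω | X i ω = 1}) := by
      rw [← exp_sum, ← exp_add, Finset.mul_sum]

lemma chernoff_exponent_le {n θ pc : ℝ} (hθ : n * θ ≤ 2) (hpc : 4 ≤ n * pc) :
    -log 2 * (n * pc) + (exp (log 2) - 1) * (n * θ) ≤ 2 / 3 - n * pc / 3 := by
  rw [exp_log two_pos]
  nlinarith [log_two_gt_d9]

theorem measure_mean_gt_le_exp_of_zero_or_one {Ω : Type*} [MeasurableSpace Ω] {P : Measure Ω}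
    [IsProbabilityMeasure P] {n : ℕ} (hn : 0 < n) {X : Fin n → Ω → ℝ} (hind : iIndepFun X P)
    (hXm : ∀ b, Measurable (X b)) (hX : ∀ b ω, X b ω = 0 ∨ X b ω = 1) {θ : ℝ} (hθ0 : 0 ≤ θ)
    (hlaw : ∀ b, P {ω | X b ω = 1} = ENNReal.ofReal θ) (hθ : θ ≤ 2 / n) {pc : ℝ}
    (hpc : 4 / n ≤ pc) :
    P {ω | pc < (1 / n : ℝ) * ∑ b, X b ω} ≤ ENNReal.ofReal (exp (2 / 3 - n * pc / 3)) := by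
  have hn' : (0 : ℝ) < n := Nat.cast_pos.mpr hn
  have hlaw_real : ∀ b, P.real {ω | X b ω = 1} = θ := fun b ↦ by
    rw [measureReal_def, hlaw b, ENNReal.toReal_ofReal hθ0]
  have hsub : {ω | pc < (1 / n : ℝ) * ∑ b, X b ω} ⊆ {ω | n * pc ≤ ∑ b, X b ω} := fun ω hω ↦ by
    rw [Set.mem_ofPred_eq, one_div_mul_eq_div, lt_div_iff₀ hn'] at hω
    exact (by linarith : n * pc ≤ ∑ b, X b ω)
  have htail := measureReal_sum_ge_le_of_zero_or_one hind hXm hX (log_nonneg one_le_two) (n * pc)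
  simp only [hlaw_real, Finset.sum_const, Finset.card_univ, Fintype.card_fin, nsmul_eq_mul] at htail
  calc P {ω | pc < (1 / n : ℝ) * ∑ b, X b ω}
      ≤ P {ω | n * pc ≤ ∑ b, X b ω} := measure_mono hsub
    _ = ENNReal.ofReal (P.real {ω | n * pc ≤ ∑ b, X b ω}) := (ofReal_measureReal).symm
    _ ≤ ENNReal.ofReal (exp (2 / 3 - n * pc / 3)) := by
      refine ENNReal.ofReal_le_ofReal (htail.trans (exp_le_exp.mpr (chernoff_exponent_le ?_ ?_)))
      · rwa [le_div_iff₀ hn', mul_comm] at hθ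
      · rwa [div_le_iff₀ hn', mul_comm] at hpc

theorem bip_false_discovery_probability_chernoff_general
    {Ω : Type*} [MeasurableSpace Ω] (P : Measure Ω) [IsProbabilityMeasure P]
    (p q n : ℕ) (hn : 0 < n) (hqp : q ≤ p)
    (K : Finset (Fin p)) (hK : K.card = p - q)
    (θ : Fin p → ℝ) (hθ0 : ∀ j, 0 ≤ θ j)
    (hθK : ∀ j ∈ K, θ j ≤ 2 / n)
    (B : Fin p → Fin n → Ω → ℝ)
    (hBmeas : ∀ j b, Measurable (B j b))
    (hB01 : ∀ j b ω, B j b ω = 0 ∨ B j b ω = 1)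
    (hBlaw : ∀ j b, P {ω | B j b ω = 1} = ENNReal.ofReal (θ j))
    (hindep : iIndepFun
      (fun (jb : Fin p × Fin n) ω => B jb.1 jb.2 ω) P)
    (pc : ℝ) (hpc : 4 / n ≤ pc) :
    (1 : ℝ≥0∞) - P {ω | ∀ j ∈ K, (1 / n : ℝ) * ∑ b : Fin n, B j b ω ≤ pc}
      ≤ ENNReal.ofReal (((p : ℝ) - q) * Real.exp (2 / 3 - n * pc / 3)) := by
  set A := {ω | ∀ j ∈ K, (1 / n : ℝ) * ∑ b : Fin n, B j b ω ≤ pc}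
  have hrow : ∀ j, iIndepFun (B j) P := fun j ↦
    hindep.precomp (g := fun b ↦ (j, b)) fun _ _ h ↦ (Prod.mk.inj h).2
  have hAc : Aᶜ = ⋃ j ∈ K, {ω | pc < (1 / n : ℝ) * ∑ b, B j b ω} := by
    ext ω; simp [A]
  calc 1 - P A ≤ P Aᶜ := tsub_le_iff_left.2 (measure_univ (μ := P) ▸ measure_univ_le_add_compl A)
    _ ≤ ∑ j ∈ K, P {ω | pc < (1 / n : ℝ) * ∑ b, B j b ω} := hAc ▸ measure_biUnion_finset_le _ _
    _ ≤ ∑ _j ∈ K, ENNReal.ofReal (exp (2 / 3 - n * pc / 3)) := Finset.sum_le_sum fun j hj ↦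
      measure_mean_gt_le_exp_of_zero_or_one hn (hrow j) (hBmeas j) (hB01 j) (hθ0 j) (hBlaw j)
        (hθK j hj) hpc
    _ = ENNReal.ofReal (((p : ℝ) - q) * exp (2 / 3 - n * pc / 3)) := by
      rw [Finset.sum_const, hK, nsmul_eq_mul, ← ENNReal.ofReal_natCast,
        ← ENNReal.ofReal_mul (Nat.cast_nonneg _), Nat.cast_sub hqp]

/-- Chernoff-based false discovery bound for the bagging inclusion probability
(BIP) estimator: `Bⱼᵇ` are independent `{0,1}`-valued Bernoulli(`θⱼ`) indicators with `θⱼ ≤ 2/n`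
for every non-active index `j ∈ K` (`|K| = p − q`); if `p_c ≥ 4/n` then
`1 − P(K ⊆ K̂_BIP) ≤ (p − q)·exp(2/3 − n p_c/3)`, where
`K̂_BIP = {j : (1/n)∑_b Bⱼᵇ ≤ p_c}`. -/
theorem bip_false_discovery_probability_chernoff
    {Ω : Type*} [MeasurableSpace Ω] (P : Measure Ω) [IsProbabilityMeasure P]
    (p q n : ℕ) (hn : 0 < n) (hqp : q ≤ p)
    (K : Finset (Fin p)) (hK : K.card = p - q)
    (θ : Fin p → ℝ) (hθ0 : ∀ j, 0 ≤ θ j) (hθ1 : ∀ j, θ j ≤ 1)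
    (hθK : ∀ j ∈ K, θ j ≤ 2 / n)
    (B : Fin p → Fin n → Ω → ℝ)
    (hBmeas : ∀ j b, Measurable (B j b))
    (hB01 : ∀ j b ω, B j b ω = 0 ∨ B j b ω = 1)
    (hBlaw : ∀ j b, P {ω | B j b ω = 1} = ENNReal.ofReal (θ j))
    (hindep : iIndepFun
      (fun (jb : Fin p × Fin n) ω => B jb.1 jb.2 ω) P)
    (pc : ℝ) (hpc0 : 0 < pc) (hpc1 : pc < 1) (hpc : 4 / n ≤ pc) :
    (1 : ℝ≥0∞) - P {ω | ∀ j ∈ K, (1 / n : ℝ) * ∑ b : Fin n, B j b ω ≤ pc}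
      ≤ ENNReal.ofReal (((p : ℝ) - q) * Real.exp (2 / 3 - n * pc / 3)) :=
  bip_false_discovery_probability_chernoff_general P p q n hn hqp K hK θ hθ0 hθK B hBmeas hB01 hBlaw
    hindep pc hpc
end
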